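/- arXiv:1201.5168 — 2 statements merged into one kernel-verified Lean document; each statement's English description precedes it below -/
import Mathlib

section
/- For integers 0 ≤ k ≤ h, let f(h,k) be the maximum number of leaves of a rooted binary tree of height at most h no restriction of which is a balanced rooted binary tree of height more than k. Then f(h,k) = 2^k when h = k or k = 0, and for 0 < k < h, f(h,k) = Σ_{i=0}^{k} C(h−i−1, k−i)·2^i, where C(·,·) denotes the binomial coefficient. -/
/-!
# Rooted binary phylogenetic trees

`RTree L` is the type of rooted binary trees with leaves labelled by elements of `L`:
every internal vertex has exactly two children (a left child and a right child), and
a tree with one leaf is a single vertex.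
-/

inductive RTree (L : Type) : Type
  | leaf : L → RTree L
  | node : RTree L → RTree L → RTree L

namespace RTree

variable {L : Type}

/-- The list of leaf labels of a rooted binary tree, read from left to right. -/
def leafList : RTree L → List L
  | leaf b => [b]
  | node l r => leafList l ++ leafList r

/-- The number of leaves of a rooted binary tree. -/
def numLeaves (T : RTree L) : ℕ := T.leafList.length

/-- The set of leaf labels of a rooted binary tree. -/
def leafSet (T : RTree L) : Set L := {b | b ∈ T.leafList}

/-- The height of a rooted binary tree: the maximum distance from the root to a leaf. -/
def height : RTree L → ℕ
  | leaf _ => 0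
  | node l r => max (height l) (height r) + 1

/-- A rooted binary tree is balanced if all of its leaves are at the same distance
from the root. -/
def IsBalanced : RTree L → Prop
  | leaf _ => True
  | node l r => IsBalanced l ∧ IsBalanced r ∧ height l = height r

/-- A rooted binary tree is phylogenetic if its leaves are labelled bijectively by a
finite set, i.e. all leaf labels are distinct. -/
def IsPhylo (T : RTree L) : Prop := T.leafList.Nodup

/-- `Embeds S T` is the subtree relation `S ⪯ T`: there is an injective map `f` from the
vertices of `S` to the vertices of `T` such that `f x = x` for every leaf `x` of `S`
(leaves being identified across trees by their labels) and
`f (x ∧ y) = f x ∧ f y` for all vertices `x`, `y` of `S`, where `∧` denotes the most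
recent common ancestor.  Equivalently (for trees with distinct leaf labels), `S` is the
restriction of `T` to the leaf set of `S`, up to rooted isomorphism; this structural
characterization is taken as the definition. -/
inductive Embeds : RTree L → RTree L → Prop
  | leaf (b : L) : Embeds (RTree.leaf b) (RTree.leaf b)
  | left {S l r : RTree L} : Embeds S l → Embeds S (RTree.node l r)
  | right {S l r : RTree L} : Embeds S r → Embeds S (RTree.node l r)
  | pair {s₁ s₂ l r : RTree L} :
      Embeds s₁ l → Embeds s₂ r → Embeds (RTree.node s₁ s₂) (RTree.node l r)
  | pair_swap {s₁ s₂ l r : RTree L} :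
      Embeds s₁ r → Embeds s₂ l → Embeds (RTree.node s₁ s₂) (RTree.node l r)

/-- `mast T₁ T₂` is the maximum cardinality of a subset `X ⊆ L(T₁) ∩ L(T₂)` such that
the restrictions `T₁|X` and `T₂|X` are isomorphic; equivalently, the maximum number of
leaves of a rooted binary phylogenetic tree `S` with `S ⪯ T₁` and `S ⪯ T₂`. -/
noncomputable def mast (T₁ T₂ : RTree L) : ℕ :=
  sSup {n | ∃ S : RTree L, S.IsPhylo ∧ Embeds S T₁ ∧ Embeds S T₂ ∧ S.numLeaves = n}

end RTree

/-- `fExt h k` is the maximum number of leaves of a rooted binary (phylogenetic) tree of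
height at most `h` no restriction of which is a balanced rooted binary tree of height
more than `k`.  (A restriction of `T` is any rooted binary tree `S` with `S ⪯ T`.) -/
noncomputable def fExt (h k : ℕ) : ℕ :=
  sSup {n | ∃ T : RTree ℕ, T.IsPhylo ∧ T.height ≤ h ∧
    (∀ S : RTree ℕ, RTree.Embeds S T → S.IsBalanced → S.height ≤ k) ∧ T.numLeaves = n}

/-!
Let `b T` be the largest height of a balanced restriction of `T`; it satisfies
`b (node l r) = max (max (b l) (b r)) (min (b l) (b r) + 1)`. Hence if `node l r` has
`b ≤ k + 1`, one of `l`, `r` has `b ≤ k`, so the maximal number of leaves obeys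
`f (h+1) (k+1) ≤ f h (k+1) + f h k`, with `f 0 k = f h 0 = 1`. The tree built by following this
recursion attains the bound, and the closed form satisfies the same Pascal-type recursion.
-/

namespace RTree

variable {L : Type}

@[simp]
theorem numLeaves_node (l r : RTree L) : (node l r).numLeaves = l.numLeaves + r.numLeaves := by
  simp [numLeaves, leafList]

/-- The maximum height of a balanced restriction of the tree. -/
def balancedHeight : RTree L → ℕ
  | leaf _ => 0
  | node l r =>
      max (max l.balancedHeight r.balancedHeight) (min l.balancedHeight r.balancedHeight + 1)

theorem height_le_balancedHeight {S T : RTree L} (hST : Embeds S T) (hS : S.IsBalanced) :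
    S.height ≤ T.balancedHeight := by
  induction hST with
  | leaf b => simp [height, balancedHeight]
  | left _ ih | right _ ih => have := ih hS; simp only [balancedHeight]; omega
  | pair _ _ ih₁ ih₂ | pair_swap _ _ ih₁ ih₂ =>
    obtain ⟨hS₁, hS₂, heq⟩ := hS
    have := ih₁ hS₁
    have := ih₂ hS₂
    simp only [height, balancedHeight]; omega

theorem exists_embeds_isBalanced_height_eq (T : RTree L) :
    ∃ S, Embeds S T ∧ S.IsBalanced ∧ S.height = T.balancedHeight := by
  induction T with
  | leaf b => exact ⟨leaf b, .leaf b, trivial, rfl⟩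
  | node l r ihl ihr =>
    obtain ⟨Sl, hSl, hbl, hl⟩ := ihl
    obtain ⟨Sr, hSr, hbr, hr⟩ := ihr
    rcases lt_trichotomy l.balancedHeight r.balancedHeight with hlt | heq | hgt
    · exact ⟨Sr, .right hSr, hbr, by simp only [balancedHeight]; omega⟩
    · exact ⟨node Sl Sr, .pair hSl hSr, ⟨hbl, hbr, by omega⟩, by
        simp only [height, balancedHeight]; omega⟩
    · exact ⟨Sl, .left hSl, hbl, by simp only [balancedHeight]; omega⟩

theorem forall_embeds_isBalanced_height_le_iff (T : RTree L) (k : ℕ) :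
    (∀ S, Embeds S T → S.IsBalanced → S.height ≤ k) ↔ T.balancedHeight ≤ k := by
  refine ⟨fun h => ?_, fun h S hST hS => (height_le_balancedHeight hST hS).trans h⟩
  obtain ⟨S, hST, hS, hSh⟩ := T.exists_embeds_isBalanced_height_eq
  exact hSh ▸ h S hST hS

end RTree

open RTree

/-- The extremal number `f h k`, given by its recursion. -/
def maxLeaves : ℕ → ℕ → ℕ
  | 0, _ => 1
  | _ + 1, 0 => 1
  | h + 1, k + 1 => maxLeaves h (k + 1) + maxLeaves h k

theorem maxLeaves_pos : ∀ h k, 0 < maxLeaves h k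
  | 0, _ | _ + 1, 0 => Nat.one_pos
  | h + 1, k + 1 => Nat.add_pos_left (maxLeaves_pos h (k + 1)) _

theorem maxLeaves_zero_right (h : ℕ) : maxLeaves h 0 = 1 := by
  cases h <;> rfl

theorem maxLeaves_of_le : ∀ {h k : ℕ}, h ≤ k → maxLeaves h k = 2 ^ h
  | 0, _, _ => rfl
  | h + 1, k + 1, hhk => by
    rw [maxLeaves, maxLeaves_of_le (by omega), maxLeaves_of_le (by omega), pow_succ, mul_two]

theorem numLeaves_le_maxLeaves {L : Type} (T : RTree L) :
    ∀ {h k : ℕ}, T.height ≤ h → T.balancedHeight ≤ k → T.numLeaves ≤ maxLeaves h k := by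
  induction T with
  | leaf b => intro h k _ _; exact maxLeaves_pos h k
  | node l r ihl ihr =>
    intro h k hh hk
    simp only [height, balancedHeight] at hh hk
    obtain ⟨h, rfl⟩ : ∃ h', h = h' + 1 := ⟨h - 1, by omega⟩
    obtain ⟨k, rfl⟩ : ∃ k', k = k' + 1 := ⟨k - 1, by omega⟩
    rw [numLeaves_node, maxLeaves]
    rcases le_total l.balancedHeight r.balancedHeight with hlr | hrl
    · have := ihl (h := h) (k := k) (by omega) (by omega)
      have := ihr (h := h) (k := k + 1) (by omega) (by omega)
      omega
    · have := ihl (h := h) (k := k + 1) (by omega) (by omega)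
      have := ihr (h := h) (k := k) (by omega) (by omega)
      omega

/-- The extremal tree of height `h` whose balanced restrictions have height at most `k`,
with leaves labelled `n, n + 1, …`. -/
def extremalTree : ℕ → ℕ → ℕ → RTree ℕ
  | 0, _, n | _ + 1, 0, n => leaf n
  | h + 1, k + 1, n =>
      node (extremalTree h (k + 1) n) (extremalTree h k (n + maxLeaves h (k + 1)))

theorem leafList_extremalTree :
    ∀ h k n, (extremalTree h k n).leafList = List.range' n (maxLeaves h k)
  | 0, _, _ | _ + 1, 0, _ => rfl
  | h + 1, k + 1, n => by
    rw [extremalTree, leafList, leafList_extremalTree, leafList_extremalTree, maxLeaves,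
      List.range'_append_1]

theorem height_extremalTree_le : ∀ h k n, (extremalTree h k n).height ≤ h
  | 0, _, _ | _ + 1, 0, _ => Nat.zero_le _
  | h + 1, k + 1, n => by
    have := height_extremalTree_le h (k + 1) n
    have := height_extremalTree_le h k (n + maxLeaves h (k + 1))
    simp only [extremalTree, height]; omega

theorem balancedHeight_extremalTree_le : ∀ h k n, (extremalTree h k n).balancedHeight ≤ k
  | 0, _, _ | _ + 1, 0, _ => Nat.zero_le _
  | h + 1, k + 1, n => by
    have := balancedHeight_extremalTree_le h (k + 1) n
    have := balancedHeight_extremalTree_le h k (n + maxLeaves h (k + 1))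
    simp only [extremalTree, balancedHeight]; omega

theorem fExt_eq_maxLeaves (h k : ℕ) : fExt h k = maxLeaves h k := by
  refine IsGreatest.csSup_eq ⟨⟨extremalTree h k 0, ?_, height_extremalTree_le h k 0, ?_, ?_⟩, ?_⟩
  · rw [IsPhylo, leafList_extremalTree]
    exact List.nodup_range'
  · exact (forall_embeds_isBalanced_height_le_iff _ k).2 (balancedHeight_extremalTree_le h k 0)
  · rw [numLeaves, leafList_extremalTree, List.length_range']
  · rintro _ ⟨T, -, hh, hk, rfl⟩
    exact numLeaves_le_maxLeaves T hh ((forall_embeds_isBalanced_height_le_iff T k).1 hk)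

def closedForm (h k : ℕ) : ℕ := ∑ i ∈ Finset.range (k + 1), (h - i - 1).choose (k - i) * 2 ^ i

theorem closedForm_self (h : ℕ) : closedForm h h = 2 ^ h := by
  rw [closedForm, Finset.sum_range_succ, Nat.sub_self, Nat.choose_zero_right, one_mul,
    Finset.sum_eq_zero fun i hi => by
      rw [Nat.choose_eq_zero_of_lt (by simp at hi; omega), zero_mul], zero_add]

theorem closedForm_zero_right (h : ℕ) : closedForm h 0 = 1 := by
  simp [closedForm]

theorem closedForm_succ_succ {h k : ℕ} (hkh : k < h) :
    closedForm (h + 1) (k + 1) = closedForm h (k + 1) + closedForm h k := by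
  simp only [closedForm, Finset.sum_range_succ _ (k + 1), Nat.sub_self, Nat.choose_zero_right,
    one_mul]
  have pascal : ∀ i ∈ Finset.range (k + 1),
      (h + 1 - i - 1).choose (k + 1 - i) * 2 ^ i =
        (h - i - 1).choose (k + 1 - i) * 2 ^ i + (h - i - 1).choose (k - i) * 2 ^ i := by
    intro i hi
    rw [Finset.mem_range] at hi
    rw [show h + 1 - i - 1 = h - i - 1 + 1 by omega, show k + 1 - i = k - i + 1 by omega,
      Nat.choose_succ_succ', add_mul, add_comm]
  rw [Finset.sum_congr rfl pascal, Finset.sum_add_distrib]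
  ring

theorem maxLeaves_eq_closedForm : ∀ {h k : ℕ}, k ≤ h → maxLeaves h k = closedForm h k
  | h, 0, _ => by rw [maxLeaves_zero_right, closedForm_zero_right]
  | h + 1, k + 1, hkh => by
    rcases (Nat.succ_le_succ_iff.1 hkh).lt_or_eq with hlt | rfl
    · rw [maxLeaves, closedForm_succ_succ hlt, maxLeaves_eq_closedForm hlt,
        maxLeaves_eq_closedForm hlt.le]
    · rw [maxLeaves_of_le le_rfl, closedForm_self]

theorem stmt_5_general (h k : ℕ) :
    ((h = k ∨ k = 0) → fExt h k = 2 ^ k) ∧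
    (0 < k → k < h →
      fExt h k = ∑ i ∈ Finset.range (k + 1), Nat.choose (h - i - 1) (k - i) * 2 ^ i) := by
  refine ⟨?_, fun _ hkh => ?_⟩
  · rintro (rfl | rfl)
    · rw [fExt_eq_maxLeaves, maxLeaves_of_le le_rfl]
    · rw [fExt_eq_maxLeaves, maxLeaves_zero_right, pow_zero]
  · exact (fExt_eq_maxLeaves h k).trans (maxLeaves_eq_closedForm hkh.le)

/-- `f(h,k) = 2^k` when `h = k` or `k = 0`, and for `0 < k < h`,
`f(h,k) = Σ_{i=0}^{k} C(h-i-1, k-i)·2^i`. -/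
theorem stmt_5 (h k : ℕ) (hkh : k ≤ h) :
    ((h = k ∨ k = 0) → fExt h k = 2 ^ k) ∧
    (0 < k → k < h →
      fExt h k = ∑ i ∈ Finset.range (k + 1), Nat.choose (h - i - 1) (k - i) * 2 ^ i) :=
  stmt_5_general h k
end

section
/- If T1 and T2 are (unrooted) binary phylogenetic trees on the same leaf-set of cardinality n, and T1 is a caterpillar, then mast{T1, T2} ≥ (1/3)·log n. -/
/-!
# Unrooted binary phylogenetic trees, via rooted representatives

An unrooted binary phylogenetic tree (all internal vertices of degree 3) with at least
two leaves is represented by any rooted binary tree obtained from it by subdividing an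
edge and rooting there; conversely, suppressing the (degree-2) root of a rooted binary
tree yields an unrooted one.  Two rooted trees represent the same unrooted tree (i.e.
the unrooted trees are isomorphic by a graph isomorphism fixing every leaf label) iff
they are related by the equivalence relation `URel` generated by moving the root across
an edge together with (unordered) rooted isomorphism.
-/

namespace RTree

variable {L : Type}

/-- Rooted isomorphism of rooted binary trees, fixing all leaf labels (the two children
of a vertex are unordered). -/
inductive RIso : RTree L → RTree L → Prop
  | leaf (b : L) : RIso (RTree.leaf b) (RTree.leaf b)
  | pair {a b c d : RTree L} :
      RIso a c → RIso b d → RIso (RTree.node a b) (RTree.node c d)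
  | pair_swap {a b c d : RTree L} :
      RIso a d → RIso b c → RIso (RTree.node a b) (RTree.node c d)

/-- Moving the root of a rooted binary tree across one edge of the underlying unrooted
tree: this does not change the unrooted tree obtained by suppressing the root. -/
inductive RootMove : RTree L → RTree L → Prop
  | assoc (a b c : RTree L) :
      RootMove (RTree.node a (RTree.node b c)) (RTree.node (RTree.node a b) c)

/-- `URel S T` holds iff the unrooted binary trees obtained from `S` and `T` by
suppressing their roots are isomorphic by a graph isomorphism fixing every leaf label. -/
def URel (S T : RTree L) : Prop :=
  Relation.EqvGen (fun X Y => RootMove X Y ∨ RIso X Y) S T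

/-- `umast T₁ T₂` is the maximum agreement subtree size of the *unrooted* binary
phylogenetic trees represented by `T₁` and `T₂`: the maximum cardinality of a set
`X ⊆ L(T₁) ∩ L(T₂)` such that the unrooted restrictions `T₁|X` and `T₂|X` are
isomorphic (fixing leaf labels).  Equivalently, the maximum number of leaves of a
common unrooted subtree, given here by a pair of rooted representatives. -/
noncomputable def umast (T₁ T₂ : RTree L) : ℕ :=
  sSup {n | ∃ S₁ S₂ : RTree L, S₁.IsPhylo ∧ S₂.IsPhylo ∧
    Embeds S₁ T₁ ∧ Embeds S₂ T₂ ∧ URel S₁ S₂ ∧ S₁.numLeaves = n}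

end RTree

namespace RTree

variable {L : Type}

/-- The tree consisting of a single leaf. -/
def IsLeafTree : RTree L → Prop
  | RTree.leaf _ => True
  | RTree.node _ _ => False

/-- A rooted caterpillar: at every internal vertex, at least one child is a leaf. -/
def IsCatR : RTree L → Prop
  | RTree.leaf _ => True
  | RTree.node l r => (IsLeafTree l ∧ IsCatR r) ∨ (IsLeafTree r ∧ IsCatR l)

/-- An unrooted binary phylogenetic tree is a caterpillar if its internal vertices form
a path; equivalently, some rooted representative of it is a rooted caterpillar. -/
def UCaterpillar (T : RTree L) : Prop := ∃ S : RTree L, URel S T ∧ IsCatR S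

end RTree

/-!
Read the caterpillar `T₁` as a linear order `f` of the leaves.  A comb of `T₂` whose leaves are
monotone for `f` is, up to moving the root, also a restriction of `T₁`, so it is an agreement
subtree.  Long monotone combs exist by an Erdős–Szekeres type induction on `T₂`: if its increasing
and decreasing combs have at most `i` and `d` leaves, it has at most `(5/2)^(i+d-2)` leaves.  At a
node, a leaf of one child that is extreme for `f` can be put in front of the monotone combs of the
other child, so each part of the leaf set that the induction splits off loses one from `i` or from
`d`.  With `i, d ≤ mast` this gives `n ≤ (25/4)^mast ≤ 8^mast`.
-/

namespace RTree

variable {L : Type}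

@[simp] lemma mem_leafList_node {x : L} {l r : RTree L} :
    x ∈ (node l r).leafList ↔ x ∈ l.leafList ∨ x ∈ r.leafList :=
  List.mem_append

lemma countP_leafList_node (P : L → Bool) (l r : RTree L) :
    (node l r).leafList.countP P = l.leafList.countP P + r.leafList.countP P :=
  List.countP_append

lemma embeds_leaf_of_mem {b : L} {T : RTree L} (h : b ∈ T.leafList) : Embeds (leaf b) T := by
  induction T with
  | leaf c =>
    obtain rfl : b = c := List.mem_singleton.mp h
    exact Embeds.leaf b
  | node l r ihl ihr =>
    rcases mem_leafList_node.mp h with hl | hr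
    · exact Embeds.left (ihl hl)
    · exact Embeds.right (ihr hr)

lemma Embeds.node_comm {S l r : RTree L} (h : Embeds S (node l r)) : Embeds S (node r l) := by
  cases h with
  | left h => exact Embeds.right h
  | right h => exact Embeds.left h
  | pair h₁ h₂ => exact Embeds.pair_swap h₁ h₂
  | pair_swap h₁ h₂ => exact Embeds.pair h₁ h₂

lemma Embeds.subperm {S T : RTree L} (h : Embeds S T) : S.leafList.Subperm T.leafList := by
  induction h with
  | leaf b => exact List.Subperm.refl _
  | left _ ih => exact ih.trans (List.sublist_append_left _ _).subperm
  | right _ ih => exact ih.trans (List.sublist_append_right _ _).subperm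
  | pair _ _ ih₁ ih₂ => exact ih₁.append ih₂
  | pair_swap _ _ ih₁ ih₂ => exact (ih₁.append ih₂).trans List.perm_append_comm.subperm

lemma Embeds.numLeaves_le {S T : RTree L} (h : Embeds S T) : S.numLeaves ≤ T.numLeaves :=
  h.subperm.length_le

namespace RIso

protected lemma refl : ∀ T : RTree L, RIso T T
  | RTree.leaf b => RIso.leaf b
  | RTree.node l r => RIso.pair (RIso.refl l) (RIso.refl r)

protected lemma symm {S T : RTree L} (h : RIso S T) : RIso T S := by
  induction h with
  | leaf b => exact RIso.leaf b
  | pair _ _ ih₁ ih₂ => exact RIso.pair ih₁ ih₂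
  | pair_swap _ _ ih₁ ih₂ => exact RIso.pair_swap ih₂ ih₁

lemma node_comm (a b : RTree L) : RIso (node a b) (node b a) :=
  RIso.pair_swap (RIso.refl a) (RIso.refl b)

lemma perm {S T : RTree L} (h : RIso S T) : S.leafList.Perm T.leafList := by
  induction h with
  | leaf b => exact List.Perm.refl _
  | pair _ _ ih₁ ih₂ => exact ih₁.append ih₂
  | pair_swap _ _ ih₁ ih₂ => exact (ih₁.append ih₂).trans List.perm_append_comm

end RIso

lemma Embeds.trans_riso {S X Y : RTree L} (hS : Embeds S X) (h : RIso X Y) : Embeds S Y := by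
  induction h generalizing S with
  | leaf b => exact hS
  | pair _ _ ih₁ ih₂ =>
    cases hS with
    | left h => exact Embeds.left (ih₁ h)
    | right h => exact Embeds.right (ih₂ h)
    | pair p q => exact Embeds.pair (ih₁ p) (ih₂ q)
    | pair_swap p q => exact Embeds.pair_swap (ih₂ p) (ih₁ q)
  | pair_swap _ _ ih₁ ih₂ =>
    cases hS with
    | left h => exact Embeds.right (ih₁ h)
    | right h => exact Embeds.left (ih₂ h)
    | pair p q => exact Embeds.pair_swap (ih₁ p) (ih₂ q)
    | pair_swap p q => exact Embeds.pair (ih₂ p) (ih₁ q)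

namespace URel

protected lemma refl (T : RTree L) : URel T T := Relation.EqvGen.refl T

protected lemma symm {S T : RTree L} (h : URel S T) : URel T S := Relation.EqvGen.symm _ _ h

protected lemma trans {S T U : RTree L} (h₁ : URel S T) (h₂ : URel T U) : URel S U :=
  Relation.EqvGen.trans _ _ _ h₁ h₂

end URel

lemma RIso.urel {S T : RTree L} (h : RIso S T) : URel S T := Relation.EqvGen.rel _ _ (Or.inr h)

lemma RootMove.urel {S T : RTree L} (h : RootMove S T) : URel S T :=
  Relation.EqvGen.rel _ _ (Or.inl h)

lemma urel_assoc (a b c : RTree L) : URel (node a (node b c)) (node (node a b) c) :=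
  (RootMove.assoc a b c).urel

lemma URel.perm {S T : RTree L} (h : URel S T) : S.leafList.Perm T.leafList := by
  induction h with
  | rel x y h =>
    rcases h with ⟨a, b, c⟩ | h
    · simp [leafList, List.append_assoc]
    · exact h.perm
  | refl x => exact List.Perm.refl _
  | symm x y _ ih => exact ih.symm
  | trans x y z _ _ ih₁ ih₂ => exact ih₁.trans ih₂

lemma URel.isPhylo {S T : RTree L} (h : URel S T) (hS : S.IsPhylo) : T.IsPhylo :=
  h.perm.nodup_iff.mp hS

lemma URel.numLeaves_eq {S T : RTree L} (h : URel S T) : S.numLeaves = T.numLeaves :=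
  h.perm.length_eq

lemma exists_urel_embeds_assoc_of_pair {s₁ s₂ a b c : RTree L} (h₁ : Embeds s₁ a)
    (h₂ : Embeds s₂ (node b c)) :
    ∃ S', URel (node s₁ s₂) S' ∧ Embeds S' (node (node a b) c) := by
  cases h₂ with
  | left h => exact ⟨_, URel.refl _, Embeds.left (Embeds.pair h₁ h)⟩
  | right h => exact ⟨_, URel.refl _, Embeds.pair (Embeds.left h₁) h⟩
  | pair p q => exact ⟨_, urel_assoc _ _ _, Embeds.pair (Embeds.pair h₁ p) q⟩
  | pair_swap p q =>
    exact ⟨_, ((RIso.refl _).pair (RIso.node_comm _ _)).urel.trans (urel_assoc _ _ _),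
      Embeds.pair (Embeds.pair h₁ q) p⟩

/-- Only a subtree using all three of `a`, `b`, `c` has to be re-rooted along with the tree. -/
lemma RootMove.exists_urel_embeds {X Y : RTree L} (h : RootMove X Y) {S : RTree L}
    (hS : Embeds S X) : ∃ S', URel S S' ∧ Embeds S' Y := by
  obtain ⟨a, b, c⟩ := h
  cases hS with
  | left h => exact ⟨_, URel.refl _, Embeds.left (Embeds.left h)⟩
  | right h =>
    cases h with
    | left h => exact ⟨_, URel.refl _, Embeds.left (Embeds.right h)⟩
    | right h => exact ⟨_, URel.refl _, Embeds.right h⟩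
    | pair p q => exact ⟨_, URel.refl _, Embeds.pair (Embeds.right p) q⟩
    | pair_swap p q => exact ⟨_, URel.refl _, Embeds.pair_swap p (Embeds.right q)⟩
  | pair h₁ h₂ => exact exists_urel_embeds_assoc_of_pair h₁ h₂
  | pair_swap h₁ h₂ =>
    obtain ⟨S', hu, hS'⟩ := exists_urel_embeds_assoc_of_pair h₂ h₁
    exact ⟨S', (RIso.node_comm _ _).urel.trans hu, hS'⟩

/-- The inverse root move is the composite of two forward ones, up to swapping children. -/
lemma RootMove.exists_urel_embeds_symm {X Y : RTree L} (h : RootMove X Y) {S : RTree L}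
    (hS : Embeds S Y) : ∃ S', URel S S' ∧ Embeds S' X := by
  obtain ⟨a, b, c⟩ := h
  obtain ⟨S₁, u₁, e₁⟩ := (RootMove.assoc c a b).exists_urel_embeds hS.node_comm
  obtain ⟨S₂, u₂, e₂⟩ := (RootMove.assoc b c a).exists_urel_embeds e₁.node_comm
  exact ⟨S₂, u₁.trans u₂, e₂.node_comm⟩

lemma URel.exists_urel_embeds {X Y : RTree L} (h : URel X Y) :
    ∀ S, Embeds S X → ∃ S', URel S S' ∧ Embeds S' Y := by
  suffices (∀ S, Embeds S X → ∃ S', URel S S' ∧ Embeds S' Y) ∧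
      (∀ S, Embeds S Y → ∃ S', URel S S' ∧ Embeds S' X) from this.1
  induction h with
  | rel x y h =>
    rcases h with h | h
    · exact ⟨fun S hS => h.exists_urel_embeds hS, fun S hS => h.exists_urel_embeds_symm hS⟩
    · exact ⟨fun S hS => ⟨S, URel.refl S, hS.trans_riso h⟩,
        fun S hS => ⟨S, URel.refl S, hS.trans_riso h.symm⟩⟩
  | refl x => exact ⟨fun S hS => ⟨S, URel.refl S, hS⟩, fun S hS => ⟨S, URel.refl S, hS⟩⟩
  | symm x y _ ih => exact ih.symm
  | trans x y z _ _ ih₁ ih₂ =>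
    refine ⟨fun S hS => ?_, fun S hS => ?_⟩
    · obtain ⟨S₁, u₁, e₁⟩ := ih₁.1 S hS
      obtain ⟨S₂, u₂, e₂⟩ := ih₂.1 S₁ e₁
      exact ⟨S₂, u₁.trans u₂, e₂⟩
    · obtain ⟨S₁, u₁, e₁⟩ := ih₂.2 S hS
      obtain ⟨S₂, u₂, e₂⟩ := ih₁.2 S₁ e₁
      exact ⟨S₂, u₁.trans u₂, e₂⟩

lemma numLeaves_le_umast {T₁ T₂ S₁ S₂ : RTree L} (h₁ : Embeds S₁ T₁) (h₂ : Embeds S₂ T₂)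
    (hu : URel S₁ S₂) (hp : S₁.IsPhylo) : S₁.numLeaves ≤ umast T₁ T₂ := by
  refine le_csSup ⟨T₁.numLeaves, ?_⟩ ⟨S₁, S₂, hp, hu.isPhylo hp, h₁, h₂, hu, rfl⟩
  rintro m ⟨A, -, -, -, hA, -, -, rfl⟩
  exact hA.numLeaves_le

lemma numLeaves_le_umast_of_urel {S₀ T₁ T₂ C C' : RTree L} (hS₀ : URel S₀ T₁)
    (hC : Embeds C S₀) (hC' : Embeds C' T₂) (hCC' : URel C C') (hp : C.IsPhylo) :
    C.numLeaves ≤ umast T₁ T₂ := by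
  obtain ⟨S₁, hu, hS₁⟩ := hS₀.exists_urel_embeds C hC
  rw [hu.numLeaves_eq]
  exact numLeaves_le_umast hS₁ hC' (hu.symm.trans hCC') (hu.isPhylo hp)

def comb : L → List L → RTree L
  | x, [] => leaf x
  | x, y :: ys => node (leaf x) (comb y ys)

@[simp] lemma leafList_comb (x : L) (xs : List L) : (comb x xs).leafList = x :: xs := by
  induction xs generalizing x with
  | nil => rfl
  | cons y ys ih => simp [comb, leafList, ih]

def EmbedsComb : List L → RTree L → Prop
  | [], _ => True
  | x :: xs, T => Embeds (comb x xs) T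

namespace EmbedsComb

variable {zs : List L} {l r : RTree L}

lemma node_left (h : EmbedsComb zs l) : EmbedsComb zs (node l r) := by
  cases zs with
  | nil => trivial
  | cons x xs => exact Embeds.left h

lemma node_right (h : EmbedsComb zs r) : EmbedsComb zs (node l r) := by
  cases zs with
  | nil => trivial
  | cons x xs => exact Embeds.right h

lemma node_comm (h : EmbedsComb zs (node l r)) : EmbedsComb zs (node r l) := by
  cases zs with
  | nil => trivial
  | cons x xs => exact Embeds.node_comm h

lemma cons_node {m : L} (hm : m ∈ l.leafList) (h : EmbedsComb zs r) :
    EmbedsComb (m :: zs) (node l r) := by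
  cases zs with
  | nil => exact Embeds.left (embeds_leaf_of_mem hm)
  | cons y ys => exact Embeds.pair (embeds_leaf_of_mem hm) h

end EmbedsComb

def spine (as : List L) (t : RTree L) : RTree L := as.foldr (fun a t => node (leaf a) t) t

lemma comb_append_singleton (x : L) (xs : List L) (z : L) :
    comb x (xs ++ [z]) = spine (x :: xs) (leaf z) := by
  induction xs generalizing x with
  | nil => rfl
  | cons y ys ih => exact congrArg (node (leaf x)) (ih y)

lemma RIso.spine (as : List L) {A B : RTree L} (h : RIso A B) :
    RIso (spine as A) (spine as B) := by
  induction as with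
  | nil => exact h
  | cons a as ih => exact RIso.pair (RIso.refl _) ih

lemma urel_node_comb (t : RTree L) (y : L) (ys : List L) :
    URel (node t (comb y ys)) (spine (y :: ys).reverse t) := by
  induction ys generalizing t y with
  | nil => exact (RIso.node_comm _ _).urel
  | cons z zs ih =>
    have hspine : spine (y :: z :: zs).reverse t = spine (z :: zs).reverse (node (leaf y) t) := by
      rw [List.reverse_cons, spine, List.foldr_append]
      rfl
    rw [hspine]
    exact (urel_assoc t (leaf y) (comb z zs)).trans
      ((ih _ z).trans (RIso.spine _ (RIso.node_comm t (leaf y))).urel)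

lemma urel_comb_of_reverse_eq {x y : L} {xs ys : List L} (h : (x :: xs).reverse = y :: ys) :
    URel (comb x xs) (comb y ys) := by
  cases xs with
  | nil =>
    obtain ⟨rfl, rfl⟩ : x = y ∧ [] = ys := by simpa using h
    exact URel.refl _
  | cons z zs =>
    obtain ⟨y', ys', hrev⟩ := List.exists_cons_of_ne_nil (by simp : (z :: zs).reverse ≠ [])
    rw [List.reverse_cons, hrev, List.cons_append, List.cons.injEq] at h
    obtain ⟨rfl, rfl⟩ := h
    rw [comb_append_singleton, ← hrev]
    exact urel_node_comb (leaf x) z zs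

lemma length_le_umast {S₀ T₁ T₂ : RTree L} (hS₀ : URel S₀ T₁) {zs : List L} (hnd : zs.Nodup)
    (h₀ : EmbedsComb zs S₀) (h₂ : EmbedsComb zs T₂ ∨ EmbedsComb zs.reverse T₂) :
    zs.length ≤ umast T₁ T₂ := by
  cases zs with
  | nil => exact Nat.zero_le _
  | cons x xs =>
    have hp : (comb x xs).IsPhylo := by rwa [IsPhylo, leafList_comb]
    have hlen : (comb x xs).numLeaves = (x :: xs).length := by rw [numLeaves, leafList_comb]
    rw [← hlen]
    rcases h₂ with h₂ | h₂
    · exact numLeaves_le_umast_of_urel hS₀ h₀ h₂ (URel.refl _) hp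
    · obtain ⟨y, ys, hrev⟩ := List.exists_cons_of_ne_nil (by simp : (x :: xs).reverse ≠ [])
      rw [hrev] at h₂
      exact numLeaves_le_umast_of_urel hS₀ h₀ h₂ (urel_comb_of_reverse_eq hrev) hp

def IsCombOrder (f : L → ℕ) (S : RTree L) : Prop :=
  Set.InjOn f S.leafSet ∧
    ∀ zs : List L, (∀ x ∈ zs, x ∈ S.leafList) → zs.Pairwise (f · < f ·) → EmbedsComb zs S

lemma IsCombOrder.node_comm {f : L → ℕ} {l r : RTree L} (h : IsCombOrder f (node l r)) :
    IsCombOrder f (node r l) := by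
  have hmem : ∀ x, x ∈ (node r l).leafList ↔ x ∈ (node l r).leafList := by simp [or_comm]
  refine ⟨fun x hx y hy => h.1 ((hmem x).1 hx) ((hmem y).1 hy), fun zs hzs hinc => ?_⟩
  exact (h.2 zs (fun x hx => (hmem x).1 (hzs x hx)) hinc).node_comm

lemma isCombOrder_leaf (b : L) : IsCombOrder (fun _ => 0) (leaf b) := by
  refine ⟨fun x hx y hy _ => ?_, fun zs hzs hinc => ?_⟩
  · simp_all [leafSet, leafList]
  · match zs, hinc with
    | [], _ => trivial
    | [x], _ =>
      obtain rfl : x = b := by simpa [leafList] using hzs x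
      exact Embeds.leaf x
    | _ :: _ :: _, hinc =>
      exact absurd (List.rel_of_pairwise_cons hinc List.mem_cons_self) (lt_irrefl 0)

lemma IsCombOrder.node_leaf [DecidableEq L] {g : L → ℕ} {r : RTree L} (b : L)
    (h : IsCombOrder g r) :
    IsCombOrder (fun x => if x = b then 0 else g x + 1) (node (leaf b) r) := by
  set f : L → ℕ := fun x => if x = b then 0 else g x + 1
  have hne : ∀ {x}, f x ≠ 0 → x ≠ b := fun hx hxb => hx (if_pos hxb)
  have hmem : ∀ {x}, x ∈ (node (leaf b) r).leafList → x ≠ b → x ∈ r.leafList := by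
    intro x hx hxb
    simpa [leafList, hxb] using hx
  have hf : ∀ {x}, x ≠ b → f x = g x + 1 := fun hxb => if_neg hxb
  refine ⟨fun x hx y hy hxy => ?_, fun zs hzs hinc => ?_⟩
  · by_cases hxb : x = b <;> by_cases hyb : y = b
    · rw [hxb, hyb]
    · simp [f, hxb, hyb] at hxy
    · simp [f, hxb, hyb] at hxy
    · simp only [f, hxb, hyb, if_false, add_left_inj] at hxy
      exact h.1 (hmem hx hxb) (hmem hy hyb) hxy
  · obtain _ | ⟨x, xs⟩ := zs
    · trivial
    have hxs : ∀ y ∈ xs, y ≠ b := fun y hy =>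
      hne (by have := List.rel_of_pairwise_cons hinc hy; omega)
    have hr : ∀ ys, (∀ y ∈ ys, y ≠ b) → ys.Sublist (x :: xs) → EmbedsComb ys r := by
      intro ys hb hsub
      refine h.2 ys (fun y hy => hmem (hzs y (hsub.subset hy)) (hb y hy)) ?_
      refine (hinc.sublist hsub).imp_of_mem fun ha hc hac => ?_
      rwa [hf (hb _ ha), hf (hb _ hc), add_lt_add_iff_right] at hac
    by_cases hxb : x = b
    · subst hxb
      exact EmbedsComb.cons_node (by simp [leafList]) (hr xs hxs (List.sublist_cons_self _ _))
    · exact (hr (x :: xs) (List.forall_mem_cons.2 ⟨hxb, hxs⟩) (List.Sublist.refl _)).node_right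

lemma IsCatR.exists_isCombOrder {S : RTree L} (h : IsCatR S) : ∃ f, IsCombOrder f S := by
  classical
  induction S with
  | leaf b => exact ⟨_, isCombOrder_leaf b⟩
  | node l r ihl ihr =>
    rcases h with ⟨hl, hr⟩ | ⟨hr, hl⟩
    · cases l with
      | node _ _ => exact hl.elim
      | leaf b =>
        obtain ⟨g, hg⟩ := ihr hr
        exact ⟨_, hg.node_leaf b⟩
    · cases r with
      | node _ _ => exact hr.elim
      | leaf b =>
        obtain ⟨g, hg⟩ := ihl hl
        exact ⟨_, (hg.node_leaf b).node_comm⟩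

structure IsCombChain (R : L → L → Prop) (P : L → Bool) (T : RTree L) (zs : List L) : Prop where
  pairwise : zs.Pairwise R
  mem : ∀ x ∈ zs, P x ∧ x ∈ T.leafList
  embedsComb : EmbedsComb zs T

namespace IsCombChain

variable {R : L → L → Prop} {P : L → Bool} {l r T : RTree L} {zs : List L}

lemma nil : IsCombChain R P T [] := ⟨List.Pairwise.nil, by simp, trivial⟩

lemma singleton_leaf {b : L} (hb : P b) : IsCombChain R P (leaf b) [b] :=
  ⟨List.pairwise_singleton _ _, by simp [leafList, hb], Embeds.leaf b⟩

lemma mono {Q : L → Bool} (h : IsCombChain R P T zs) (hPQ : ∀ x, P x → Q x) :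
    IsCombChain R Q T zs :=
  ⟨h.pairwise, fun x hx => ⟨hPQ x (h.mem x hx).1, (h.mem x hx).2⟩, h.embedsComb⟩

lemma node_left (h : IsCombChain R P l zs) : IsCombChain R P (node l r) zs :=
  ⟨h.pairwise, fun x hx => ⟨(h.mem x hx).1, by simp [(h.mem x hx).2]⟩, h.embedsComb.node_left⟩

lemma node_right (h : IsCombChain R P r zs) : IsCombChain R P (node l r) zs :=
  ⟨h.pairwise, fun x hx => ⟨(h.mem x hx).1, by simp [(h.mem x hx).2]⟩, h.embedsComb.node_right⟩

lemma node_comm (h : IsCombChain R P (node l r) zs) : IsCombChain R P (node r l) zs :=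
  ⟨h.pairwise, fun x hx => ⟨(h.mem x hx).1, by simpa [or_comm] using (h.mem x hx).2⟩,
    h.embedsComb.node_comm⟩

lemma cons_node {m : L} (hm : m ∈ l.leafList) (hPm : P m) (hR : ∀ y ∈ zs, R m y)
    (h : IsCombChain R P r zs) : IsCombChain R P (node l r) (m :: zs) :=
  ⟨List.Pairwise.cons hR h.pairwise,
    List.forall_mem_cons.2 ⟨⟨hPm, by simp [hm]⟩, (h.node_right (l := l)).mem⟩,
    h.embedsComb.cons_node hm⟩

end IsCombChain

section CombOrder

variable {S₀ T₁ T₂ : RTree L} {f : L → ℕ} {P : L → Bool} {zs : List L}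

lemma IsCombChain.length_le_umast_of_lt (hS₀ : URel S₀ T₁) (hf : IsCombOrder f S₀)
    (hmem : ∀ x ∈ T₂.leafList, x ∈ S₀.leafList) (hz : IsCombChain (f · < f ·) P T₂ zs) :
    zs.length ≤ umast T₁ T₂ :=
  length_le_umast hS₀ (hz.pairwise.imp fun h => ne_of_apply_ne f h.ne)
    (hf.2 zs (fun x hx => hmem x (hz.mem x hx).2) hz.pairwise) (Or.inl hz.embedsComb)

lemma IsCombChain.length_le_umast_of_gt (hS₀ : URel S₀ T₁) (hf : IsCombOrder f S₀)
    (hmem : ∀ x ∈ T₂.leafList, x ∈ S₀.leafList) (hw : IsCombChain (f · > f ·) P T₂ zs) :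
    zs.length ≤ umast T₁ T₂ := by
  simpa using length_le_umast hS₀ (zs := zs.reverse)
    (List.pairwise_reverse.2 (hw.pairwise.imp fun h => ne_of_apply_ne f h.ne))
    (hf.2 _ (fun x hx => hmem x (hw.mem x (List.mem_reverse.1 hx)).2)
      (List.pairwise_reverse.2 hw.pairwise))
    (Or.inr (by simpa using hw.embedsComb))

end CombOrder

lemma five_halves_pow_add_pow_le {a b e : ℕ} (ha : a + 1 ≤ e) (hb : b + 1 ≤ e) :
    (5 / 2 : ℝ) ^ a + (5 / 2) ^ b ≤ (5 / 2) ^ e := by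
  obtain ⟨m, rfl⟩ : ∃ m, e = m + 1 := ⟨e - 1, by omega⟩
  have h₁ := pow_le_pow_right₀ (by norm_num : (1 : ℝ) ≤ 5 / 2) (show a ≤ m by omega)
  have h₂ := pow_le_pow_right₀ (by norm_num : (1 : ℝ) ≤ 5 / 2) (show b ≤ m by omega)
  have h₀ : (0 : ℝ) ≤ (5 / 2) ^ m := by positivity
  rw [pow_succ]
  linarith

lemma five_halves_pow_add_pow_add_pow_le {a b c e : ℕ} (ha : a + 1 ≤ e) (hb : b + 1 ≤ e)
    (hc : c + 2 ≤ e) : (5 / 2 : ℝ) ^ a + (5 / 2) ^ b + (5 / 2) ^ c ≤ (5 / 2) ^ e := by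
  obtain ⟨m, rfl⟩ : ∃ m, e = m + 2 := ⟨e - 2, by omega⟩
  have h₁ := pow_le_pow_right₀ (by norm_num : (1 : ℝ) ≤ 5 / 2) (show a ≤ m + 1 by omega)
  have h₂ := pow_le_pow_right₀ (by norm_num : (1 : ℝ) ≤ 5 / 2) (show b ≤ m + 1 by omega)
  have h₃ := pow_le_pow_right₀ (by norm_num : (1 : ℝ) ≤ 5 / 2) (show c ≤ m by omega)
  have h₀ : (0 : ℝ) ≤ (5 / 2) ^ m := by positivity
  rw [pow_succ, pow_succ] at *
  linarith

lemma exists_min_mem {α : Type*} [LinearOrder α] (f : L → α) (P : L → Prop) {s : List L}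
    (h : ∃ x ∈ s, P x) : ∃ a ∈ s, P a ∧ ∀ y ∈ s, P y → f a ≤ f y := by
  obtain ⟨a, ⟨ha, hPa⟩, hmin⟩ := Set.exists_min_image {x | x ∈ s ∧ P x} f
    ((List.finite_toSet s).subset fun _ hx => hx.1) (by simpa [Set.Nonempty] using h)
  exact ⟨a, ha, hPa, fun y hy hPy => hmin y ⟨hy, hPy⟩⟩

lemma exists_max_mem {α : Type*} [LinearOrder α] (f : L → α) (P : L → Prop) {s : List L}
    (h : ∃ x ∈ s, P x) : ∃ b ∈ s, P b ∧ ∀ y ∈ s, P y → f y ≤ f b := by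
  obtain ⟨b, ⟨hb, hPb⟩, hmax⟩ := Set.exists_max_image {x | x ∈ s ∧ P x} f
    ((List.finite_toSet s).subset fun _ hx => hx.1) (by simpa [Set.Nonempty] using h)
  exact ⟨b, hb, hPb, fun y hy hPy => hmax y ⟨hy, hPy⟩⟩

section ChainBound

variable {α : Type*} [LinearOrder α] (f : L → α)

/-- The base `5/2` satisfies `2 · (5/2) + 1 ≤ (5/2)²`, as needed in
`ChainBound.node_of_min_max_left`, and `(5/2)² ≤ 2³`, as needed in `one_third_logb_le`. -/
def ChainBound (P : L → Bool) (T : RTree L) : Prop :=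
  ∀ i d : ℕ, (∀ zs, IsCombChain (f · < f ·) P T zs → zs.length ≤ i) →
    (∀ ws, IsCombChain (f · > f ·) P T ws → ws.length ≤ d) →
    (5 / 2 : ℝ) ^ 2 * T.leafList.countP P ≤ (5 / 2) ^ (i + d)

variable {f} {P : L → Bool} {l r : RTree L}

lemma chainBound_leaf (P : L → Bool) (b : L) : ChainBound f P (leaf b) := by
  intro i d hI hD
  by_cases hb : P b
  · have hi := hI [b] (IsCombChain.singleton_leaf hb)
    have hd := hD [b] (IsCombChain.singleton_leaf hb)
    simp only [leafList, List.countP_singleton, hb, if_true, Nat.cast_one, mul_one]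
    exact pow_le_pow_right₀ (by norm_num) (by simp at hi hd; omega)
  · simp only [leafList, List.countP_singleton, hb, if_false, Bool.false_eq_true,
      Nat.cast_zero, mul_zero]
    positivity

lemma ChainBound.node_comm (h : ChainBound f P (node l r)) : ChainBound f P (node r l) := by
  intro i d hI hD
  rw [countP_leafList_node, add_comm, ← countP_leafList_node]
  exact h i d (fun zs hz => hI zs hz.node_comm) (fun ws hw => hD ws hw.node_comm)

lemma ChainBound.node_of_forall_right (hl : ChainBound f P l) (hr : ∀ y ∈ r.leafList, ¬P y) :
    ChainBound f P (node l r) := by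
  intro i d hI hD
  rw [countP_leafList_node, List.countP_eq_zero.2 hr, add_zero]
  exact hl i d (fun zs hz => hI zs hz.node_left) (fun ws hw => hD ws hw.node_left)

lemma ChainBound.node_of_min_left_max_right (hl : ChainBound f P l) (hr : ChainBound f P r)
    {a b : L} (ha : a ∈ l.leafList) (hPa : P a) (ha_lt : ∀ z ∈ r.leafList, P z → f a < f z)
    (hb : b ∈ r.leafList) (hPb : P b) (hb_gt : ∀ z ∈ l.leafList, P z → f z < f b) :
    ChainBound f P (node l r) := by
  intro i d hI hD
  have hIr : ∀ zs, IsCombChain (f · < f ·) P r zs → zs.length + 1 ≤ i := fun zs hz =>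
    hI (a :: zs) (hz.cons_node ha hPa fun z hz' => ha_lt z (hz.mem z hz').2 (hz.mem z hz').1)
  have hDl : ∀ ws, IsCombChain (f · > f ·) P l ws → ws.length + 1 ≤ d := fun ws hw =>
    hD (b :: ws)
      (hw.cons_node hb hPb fun z hz' => hb_gt z (hw.mem z hz').2 (hw.mem z hz').1).node_comm
  have hi := hIr [] IsCombChain.nil
  have hd := hDl [] IsCombChain.nil
  have hcl := hl i (d - 1) (fun zs hz => hI zs hz.node_left)
    (fun ws hw => by have := hDl ws hw; omega)
  have hcr := hr (i - 1) d (fun zs hz => by have := hIr zs hz; omega)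
    (fun ws hw => hD ws hw.node_right)
  rw [countP_leafList_node, Nat.cast_add, mul_add]
  exact (add_le_add hcl hcr).trans (five_halves_pow_add_pow_le (by simp at hi hd; omega)
    (by simp at hi hd; omega))

lemma ChainBound.node_of_min_max_left (hl : ∀ Q, ChainBound f Q l) (hr : ChainBound f P r)
    {a b y : L} (ha : a ∈ l.leafList) (hPa : P a) (ha_lt : ∀ z ∈ r.leafList, P z → f a < f z)
    (hb : b ∈ l.leafList) (hPb : P b) (hb_gt : ∀ z ∈ r.leafList, P z → f z < f b)
    (hy : y ∈ r.leafList) (hPy : P y) (hy_ne : ∀ x ∈ l.leafList, f x ≠ f y) :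
    ChainBound f P (node l r) := by
  intro i d hI hD
  -- `y` can head the increasing combs of the leaves of `l` above it, and the decreasing ones below
  set above : L → Bool := fun x => P x && decide (f y < f x)
  set below : L → Bool := fun x => P x && !decide (f y < f x)
  have habove : ∀ x, above x → P x := by simp +contextual [above]
  have hbelow : ∀ x, below x → P x := by simp +contextual [below]
  have hIa : ∀ zs, IsCombChain (f · < f ·) above l zs → zs.length + 1 ≤ i := fun zs hz =>
    hI (y :: zs) ((hz.mono habove).cons_node hy hPy fun x hx => by
      have := (hz.mem x hx).1
      simp only [above, Bool.and_eq_true, decide_eq_true_eq] at this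
      exact this.2).node_comm
  have hDb : ∀ ws, IsCombChain (f · > f ·) below l ws → ws.length + 1 ≤ d := fun ws hw =>
    hD (y :: ws) ((hw.mono hbelow).cons_node hy hPy fun x hx => by
      have := (hw.mem x hx).1
      simp only [below, Bool.and_eq_true, Bool.not_eq_true', decide_eq_false_iff_not,
        not_lt] at this
      exact lt_of_le_of_ne this.2 (hy_ne x (hw.mem x hx).2)).node_comm
  have hIr : ∀ zs, IsCombChain (f · < f ·) P r zs → zs.length + 1 ≤ i := fun zs hz =>
    hI (a :: zs) (hz.cons_node ha hPa fun z hz' => ha_lt z (hz.mem z hz').2 (hz.mem z hz').1)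
  have hDr : ∀ ws, IsCombChain (f · > f ·) P r ws → ws.length + 1 ≤ d := fun ws hw =>
    hD (b :: ws) (hw.cons_node hb hPb fun z hz' => hb_gt z (hw.mem z hz').2 (hw.mem z hz').1)
  have hi := hIr [] IsCombChain.nil
  have hd := hDr [] IsCombChain.nil
  have hca := hl above (i - 1) d (fun zs hz => by have := hIa zs hz; omega)
    (fun ws hw => hD ws (hw.mono habove).node_left)
  have hcb := hl below i (d - 1) (fun zs hz => hI zs (hz.mono hbelow).node_left)
    (fun ws hw => by have := hDb ws hw; omega)
  have hcr := hr (i - 1) (d - 1) (fun zs hz => by have := hIr zs hz; omega)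
    (fun ws hw => by have := hDr ws hw; omega)
  have hsplit : l.leafList.countP P = l.leafList.countP above + l.leafList.countP below := by
    rw [List.countP_eq_countP_filter_add _ _ (fun x => decide (f y < f x)), List.countP_filter,
      List.countP_filter]
  rw [countP_leafList_node, hsplit]
  push_cast
  simp only [List.length_nil] at hi hd
  calc (5 / 2 : ℝ) ^ 2 * (l.leafList.countP above + l.leafList.countP below +
        r.leafList.countP P)
      ≤ (5 / 2) ^ (i - 1 + d) + (5 / 2) ^ (i + (d - 1)) + (5 / 2) ^ (i - 1 + (d - 1)) := by
        rw [mul_add, mul_add]; gcongr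
    _ ≤ (5 / 2) ^ (i + d) := five_halves_pow_add_pow_add_pow_le (by omega) (by omega) (by omega)

lemma ChainBound.node_of_min_left (hl : ∀ Q, ChainBound f Q l) (hr : ChainBound f P r)
    (hdisj : ∀ x ∈ l.leafList, ∀ y ∈ r.leafList, f x ≠ f y) {a : L} (ha : a ∈ l.leafList)
    (hPa : P a) (hmin : ∀ y ∈ (node l r).leafList, P y → f a ≤ f y)
    (hr_ne : ∃ y ∈ r.leafList, P y) : ChainBound f P (node l r) := by
  have ha_lt : ∀ z ∈ r.leafList, P z → f a < f z := fun z hz hPz =>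
    (hmin z (by simp [hz]) hPz).lt_of_ne (hdisj a ha z hz)
  obtain ⟨b, hb, hPb, hmax⟩ :=
    exists_max_mem f (P · = true) (s := (node l r).leafList) ⟨a, by simp [ha], hPa⟩
  rcases mem_leafList_node.1 hb with hbl | hbr
  · obtain ⟨y, hy, hPy⟩ := hr_ne
    exact node_of_min_max_left hl hr ha hPa ha_lt hbl hPb
      (fun z hz hPz => (hmax z (by simp [hz]) hPz).lt_of_ne (hdisj b hbl z hz).symm) hy hPy
      (fun x hx => hdisj x hx y hy)
  · exact node_of_min_left_max_right (hl P) hr ha hPa ha_lt hbr hPb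
      (fun z hz hPz => (hmax z (by simp [hz]) hPz).lt_of_ne (hdisj z hz b hbr))

theorem chainBound {T : RTree L} (hnd : (T.leafList.map f).Nodup) (P : L → Bool) :
    ChainBound f P T := by
  induction T generalizing P with
  | leaf b => exact chainBound_leaf P b
  | node l r ihl ihr =>
    obtain ⟨hndl, hndr, hdisj_map⟩ := List.nodup_append'.mp (List.map_append ▸ hnd)
    have hdisj : ∀ x ∈ l.leafList, ∀ y ∈ r.leafList, f x ≠ f y := fun x hx y hy hxy =>
      hdisj_map (List.mem_map_of_mem hx) (hxy ▸ List.mem_map_of_mem hy)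
    by_cases hr : ∃ y ∈ r.leafList, P y
    swap
    · exact (ihl hndl P).node_of_forall_right (by simpa using hr)
    by_cases hl : ∃ y ∈ l.leafList, P y
    swap
    · exact ((ihr hndr P).node_of_forall_right (by simpa using hl)).node_comm
    obtain ⟨a, ha, hPa, hmin⟩ := exists_min_mem f (P · = true) (s := (node l r).leafList)
      (by obtain ⟨y, hy, hPy⟩ := hl; exact ⟨y, by simp [hy], hPy⟩)
    rcases mem_leafList_node.1 ha with hal | har
    · exact ChainBound.node_of_min_left (ihl hndl) (ihr hndr P) hdisj hal hPa hmin hr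
    · refine (ChainBound.node_of_min_left (ihr hndr) (ihl hndl P)
        (fun x hx y hy => (hdisj y hy x hx).symm) har hPa (fun y hy => hmin y ?_) hl).node_comm
      simpa [or_comm] using hy

end ChainBound

lemma one_third_logb_le {n k : ℕ} (h : (5 / 2 : ℝ) ^ 2 * n ≤ (5 / 2) ^ (k + k)) :
    1 / 3 * Real.logb 2 n ≤ k := by
  rcases Nat.eq_zero_or_pos n with rfl | hpos
  · simp
  have hn : (n : ℝ) ≤ 2 ^ (3 * k) := by
    calc (n : ℝ) ≤ (5 / 2) ^ 2 * n := le_mul_of_one_le_left (by positivity) (by norm_num)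
      _ ≤ (5 / 2) ^ (k + k) := h
      _ = (25 / 4) ^ k := by rw [← two_mul, pow_mul]; norm_num
      _ ≤ 8 ^ k := pow_le_pow_left₀ (by norm_num) (by norm_num) k
      _ = 2 ^ (3 * k) := by rw [pow_mul]; norm_num
  have := Real.logb_le_logb_of_le (b := 2) one_lt_two (by positivity) hn
  rw [Real.logb_pow, Real.logb_self_eq_one one_lt_two] at this
  push_cast at this
  linarith

end RTree

/-- If `T₁` and `T₂` are unrooted binary phylogenetic trees on the
same leaf set of cardinality `n` and `T₁` is a caterpillar, then
`mast{T₁,T₂} ≥ (1/3)·log n` (logarithm base 2). -/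
theorem stmt_10 {L : Type} (T₁ T₂ : RTree L) (n : ℕ)
    (h₁ : T₁.IsPhylo) (h₂ : T₂.IsPhylo) (hcat : RTree.UCaterpillar T₁)
    (hL : T₁.leafSet = T₂.leafSet) (hn : T₁.numLeaves = n) :
    (1 / 3 : ℝ) * Real.logb 2 n ≤ (RTree.umast T₁ T₂ : ℝ) := by
  obtain ⟨S₀, hS₀, hcat⟩ := hcat
  obtain ⟨f, hf⟩ := hcat.exists_isCombOrder
  have hmem : ∀ x, x ∈ T₂.leafList ↔ x ∈ S₀.leafList := fun x =>
    (Set.ext_iff.1 hL x).symm.trans hS₀.perm.mem_iff.symm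
  have hlen : T₂.leafList.length = n := by
    rw [← hn, RTree.numLeaves,
      ((List.perm_ext_iff_of_nodup h₂ h₁).2 fun x => (Set.ext_iff.1 hL x).symm).length_eq]
  have hbound := RTree.chainBound
    (h₂.map_on fun x hx y hy => hf.1 ((hmem x).1 hx) ((hmem y).1 hy)) (fun _ => true) _ _
    (fun zs hz => hz.length_le_umast_of_lt hS₀ hf fun x => (hmem x).1)
    (fun ws hw => hw.length_le_umast_of_gt hS₀ hf fun x => (hmem x).1)
  rw [List.countP_true, hlen] at hbound
  exact RTree.one_third_logb_le hbound
end
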